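/- Let I be an uncountable set and let G be a non-Abelian group. Then the direct sum ⊕_{α∈I} G of copies of G does not embed into Homeo₊(ℝ), the group of orientation-preserving homeomorphisms of the real line. -/

import Mathlib

/-!
Let `ψ i = φ ∘ mulSingle i`: the `ψ i` have pairwise commuting images and `ψ i ⁅a, b⁆ ≠ 1`.
Pigeonholing over rationals yields `x, y, q` and uncountably many `i` for which
`h i = ψ i ⁅x, y⁆` moves `q` to the right; fix one of them, `T = h j`, and let `J` be the component
of `q` in the support of `T`. On `J`, `T` acts like a unit translation, so a map commuting with `T`
and preserving `J` displaces points of `J` by a bounded number of `T`-steps, and the commutator of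
two such maps moves `q` by at most two steps. Further pigeonholing (on an exponent `N` and on
rationals tagging the components of `ψ i x q` and `ψ i y q`) leaves infinitely many indices with
`T q ≤ (h i ^ N) q`, from which such maps `ψ c x⁻¹ * ψ b x` and `ψ d y⁻¹ * ψ b y` are built.
Taking for `D`, `D'` products of `2N + 1` of them, `⁅D, D'⁆` is a product of `2N + 1` commuting
`h b`, so `⁅D, D'⁆ ^ N` moves `q` by at least `2N + 1` steps, yet by at most `2N`.
-/

/-- The direct sum of a family of groups, as the subgroup of the product
consisting of finitely supported elements. -/
def directSum (I : Type*) (G : I → Type*) [∀ i, Group (G i)] :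
    Subgroup (∀ i, G i) where
  carrier := {f | {i | f i ≠ 1}.Finite}
  one_mem' := by simp
  mul_mem' := by
    intro a b ha hb
    refine (Set.Finite.union ha hb).subset ?_
    intro i hi
    by_contra h
    simp only [Set.mem_setOf_eq, Set.mem_union, not_or, not_not] at h hi
    exact hi (by show a i * b i = 1; rw [h.1, h.2, one_mul])
  inv_mem' := by
    intro a ha
    refine ha.subset ?_
    intro i hi
    simp only [Set.mem_setOf_eq] at hi ⊢
    intro h
    exact hi (by show (a i)⁻¹ = 1; rw [h, inv_one])

/-- The group of orientation-preserving homeomorphisms of the real line,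
identified with the group of order-isomorphisms of `ℝ` (every order-isomorphism
of `ℝ` is automatically a homeomorphism, and conversely every
orientation-preserving homeomorphism is an order-isomorphism). -/
abbrev HomeoPlusR := ℝ ≃o ℝ

open Set Function
open scoped commutatorElement

section Commutator

variable {Γ : Type*} [Group Γ]

theorem Commute.commutatorElement_right {x a b : Γ} (ha : Commute x a) (hb : Commute x b) :
    Commute x ⁅a, b⁆ := by
  rw [commutatorElement_def]
  exact ((ha.mul_right hb).mul_right ha.inv_right).mul_right hb.inv_right

theorem commutatorElement_mul_mul {a₁ a₂ b₁ b₂ : Γ} (h₂₁ : Commute a₂ b₁) (ha : Commute a₁ a₂)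
    (h₁₂ : Commute a₁ b₂) (hb : Commute b₁ b₂) :
    ⁅a₁ * a₂, b₁ * b₂⁆ = ⁅a₁, b₁⁆ * ⁅a₂, b₂⁆ := by
  have hK : Commute ⁅a₂, b₂⁆ (a₁⁻¹ * b₁⁻¹) :=
    ((ha.commutatorElement_right h₁₂).inv_left.mul_left
      (h₂₁.symm.commutatorElement_right hb).inv_left).symm
  calc ⁅a₁ * a₂, b₁ * b₂⁆ = a₁ * (a₂ * b₁) * b₂ * a₂⁻¹ * (a₁⁻¹ * b₂⁻¹) * b₁⁻¹ := by
        simp only [commutatorElement_def, mul_inv_rev, mul_assoc]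
    _ = a₁ * b₁ * ⁅a₂, b₂⁆ * (a₁⁻¹ * b₁⁻¹) := by
        rw [h₂₁.eq, h₁₂.inv_inv.eq]; simp only [commutatorElement_def, mul_assoc]
    _ = ⁅a₁, b₁⁆ * ⁅a₂, b₂⁆ := by
        rw [mul_assoc _ ⁅a₂, b₂⁆, hK.eq]; simp only [commutatorElement_def, mul_assoc]

theorem commutatorElement_prod_range {u v : ℕ → Γ} (hu : Pairwise fun i j ↦ Commute (u i) (u j))
    (hv : Pairwise fun i j ↦ Commute (v i) (v j)) (huv : Pairwise fun i j ↦ Commute (u i) (v j))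
    (n : ℕ) :
    ⁅((List.range n).map u).prod, ((List.range n).map v).prod⁆ =
      ((List.range n).map fun i ↦ ⁅u i, v i⁆).prod := by
  induction n with
  | zero => simp
  | succ n ih =>
    have hprod {w : ℕ → Γ} {a : Γ} (h : ∀ i < n, Commute (w i) a) :
        Commute ((List.range n).map w).prod a :=
      Commute.list_prod_left _ _ (by simpa using h)
    rw [List.prod_range_succ, List.prod_range_succ, List.prod_range_succ,
      commutatorElement_mul_mul (hprod (w := v) fun i hi ↦ (huv hi.ne').symm).symm
        (hprod (w := u) fun i hi ↦ hu hi.ne) (hprod (w := u) fun i hi ↦ huv hi.ne)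
        (hprod (w := v) fun i hi ↦ hv hi.ne), ih]

end Commutator

section Families

variable {ι G M : Type*} [Group G] [Monoid M]

theorem commute_map_mul_map {ψ : ι → G →* M}
    (hψ : Pairwise fun i j ↦ ∀ g g', Commute (ψ i g) (ψ j g')) {i₁ i₂ j₁ j₂ : ι}
    (h₁₁ : i₁ ≠ j₁) (h₁₂ : i₁ ≠ j₂) (h₂₁ : i₂ ≠ j₁) (h₂₂ : i₂ ≠ j₂) (g₁ g₂ g₃ g₄ : G) :
    Commute (ψ i₁ g₁ * ψ i₂ g₂) (ψ j₁ g₃ * ψ j₂ g₄) :=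
  ((hψ h₁₁ _ _).mul_left (hψ h₂₁ _ _)).mul_right ((hψ h₁₂ _ _).mul_left (hψ h₂₂ _ _))

end Families

namespace directSum

variable {I : Type*} {G : I → Type*} [∀ i, Group (G i)] [DecidableEq I]

def mulSingle (i : I) : G i →* directSum I G :=
  (MonoidHom.mulSingle G i).codRestrict _ fun g ↦
    (finite_singleton i).subset fun _ hj ↦ by_contra fun hji ↦ hj (Pi.mulSingle_eq_of_ne hji g)

theorem mulSingle_injective (i : I) : Injective (mulSingle (G := G) i) :=
  fun _ _ h ↦ Pi.mulSingle_injective i (congrArg Subtype.val h)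

theorem commute_mulSingle {i j : I} (hij : i ≠ j) (g : G i) (g' : G j) :
    Commute (mulSingle i g) (mulSingle j g') :=
  Subtype.ext (Pi.mulSingle_commute hij g g')

end directSum

theorem Set.exists_not_countable_fiber {α β : Type*} [Countable β] {s : Set α} (hs : ¬ s.Countable)
    (f : α → β) : ∃ b, ¬ {a ∈ s | f a = b}.Countable := by
  by_contra! h
  refine hs ((countable_iUnion h).mono fun a ha ↦ ?_)
  exact mem_iUnion_of_mem (f a) ⟨ha, rfl⟩

theorem Set.infinite_of_not_countable {α : Type*} {s : Set α} (hs : ¬ s.Countable) : s.Infinite :=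
  fun h ↦ hs h.countable

theorem IsOpen.exists_rat_gt_mem {U : Set ℝ} (hU : IsOpen U) {x : ℝ} (hx : x ∈ U) :
    ∃ r : ℚ, x < r ∧ (r : ℝ) ∈ U := by
  obtain ⟨l, hxl, hl⟩ := exists_Ico_subset_of_mem_nhds (hU.mem_nhds hx) (exists_gt x)
  obtain ⟨r, hxr, hrl⟩ := exists_rat_btwn hxl
  exact ⟨r, hxr, hl ⟨hxr.le, hrl⟩⟩

namespace OrderIso

section Preorder

variable {α : Type*} [Preorder α]

theorem pow_apply_eq_iterate (f : α ≃o α) (n : ℕ) (x : α) : (f ^ n) x = f^[n] x := by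
  induction n generalizing x with
  | zero => rfl
  | succ n ih => rw [pow_succ, RelIso.mul_apply, ih, iterate_succ_apply]

theorem apply_apply_of_commute {f g : α ≃o α} (h : Commute f g) (x : α) : f (g x) = g (f x) :=
  DFunLike.congr_fun h.eq x

theorem apply_le_zpow_apply {T u : α ≃o α} (h : Commute T u) {p q : α} {k m : ℤ}
    (hp : p ≤ (T ^ k) q) (hu : u q ≤ (T ^ m) q) : u p ≤ (T ^ (k + m)) q :=
  calc u p ≤ u ((T ^ k) q) := u.monotone hp
    _ = (T ^ k) (u q) := (apply_apply_of_commute (h.zpow_left k) q).symm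
    _ ≤ (T ^ k) ((T ^ m) q) := (T ^ k).monotone hu
    _ = (T ^ (k + m)) q := by rw [zpow_add, RelIso.mul_apply]

theorem inv_apply_le_zpow_neg_apply {T u : α ≃o α} (h : Commute T u) {q : α} {m : ℤ}
    (hu : (T ^ m) q ≤ u q) : u⁻¹ q ≤ (T ^ (-m)) q := by
  refine u.symm_apply_le.2 ?_
  calc q = (T ^ (-m)) ((T ^ m) q) := by rw [← RelIso.mul_apply, ← zpow_add, neg_add_cancel]; rfl
    _ ≤ (T ^ (-m)) (u q) := (T ^ (-m)).monotone hu
    _ = u ((T ^ (-m)) q) := apply_apply_of_commute (h.zpow_left (-m)) q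

theorem pow_apply_le_pow_apply {R S : α ≃o α} (h : Commute R S) {q : α} (hle : R q ≤ S q)
    (n : ℕ) : (R ^ n) q ≤ (S ^ n) q := by
  induction n with
  | zero => exact le_rfl
  | succ n ih =>
    calc (R ^ (n + 1)) q = (R ^ n) (R q) := by rw [pow_succ, RelIso.mul_apply]
      _ ≤ (R ^ n) (S q) := (R ^ n).monotone hle
      _ = S ((R ^ n) q) := apply_apply_of_commute (h.pow_left n) q
      _ ≤ S ((S ^ n) q) := S.monotone ih
      _ = (S ^ (n + 1)) q := by rw [pow_succ', RelIso.mul_apply]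

theorem pow_apply_le_prod_pow_apply {T : α ≃o α} {w : ℕ → α ≃o α}
    (hw : Pairwise fun i j ↦ Commute (w i) (w j)) (hT : ∀ i, Commute T (w i)) {q : α} {N : ℕ}
    (hN : ∀ i, T q ≤ (w i ^ N) q) (n : ℕ) : (T ^ n) q ≤ (((List.range n).map w).prod ^ N) q := by
  induction n with
  | zero => simp
  | succ n ih =>
    set P := ((List.range n).map w).prod
    have hPw : Commute P (w n) := Commute.list_prod_left _ _ (by simpa using fun i hi ↦ hw hi.ne)
    have hTP : Commute T (P ^ N) :=
      (Commute.list_prod_right _ _ (by simpa using fun i _ ↦ hT i)).pow_right N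
    calc (T ^ (n + 1)) q = T ((T ^ n) q) := by rw [pow_succ', RelIso.mul_apply]
      _ ≤ T ((P ^ N) q) := T.monotone ih
      _ = (P ^ N) (T q) := apply_apply_of_commute hTP q
      _ ≤ (P ^ N) ((w n ^ N) q) := (P ^ N).monotone (hN n)
      _ = (((List.range (n + 1)).map w).prod ^ N) q := by
        rw [List.prod_range_succ, hPw.mul_pow, RelIso.mul_apply]

theorem mapsTo_prod_range {s : Set α} {u : ℕ → α ≃o α} (hu : ∀ i, MapsTo (u i) s s) (n : ℕ) :
    MapsTo ((List.range n).map u).prod s s := by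
  induction n with
  | zero => exact mapsTo_id s
  | succ n ih => rw [List.prod_range_succ, RelIso.coe_mul]; exact ih.comp (hu n)

end Preorder

variable {ι G : Type*} [Group G] {f T : ℝ ≃o ℝ} {p q x : ℝ}

-- `connectedComponentIn` returns `∅` when `f p = p`.
def movedComponent (f : ℝ ≃o ℝ) (p : ℝ) : Set ℝ :=
  connectedComponentIn {x | f x ≠ x} p

theorem isOpen_movedComponent (f : ℝ ≃o ℝ) (p : ℝ) : IsOpen (f.movedComponent p) :=
  (isOpen_ne_fun f.continuous continuous_id).connectedComponentIn

theorem mem_movedComponent_self (hp : f p ≠ p) : p ∈ f.movedComponent p :=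
  mem_connectedComponentIn hp

theorem mem_movedComponent_self_of_mem (hx : x ∈ f.movedComponent p) :
    p ∈ f.movedComponent p :=
  mem_movedComponent_self (connectedComponentIn_nonempty_iff.1 ⟨x, hx⟩)

theorem apply_ne_of_mem_movedComponent (hx : x ∈ f.movedComponent p) : f x ≠ x :=
  connectedComponentIn_subset _ _ hx

theorem ordConnected_movedComponent (f : ℝ ≃o ℝ) (p : ℝ) : (f.movedComponent p).OrdConnected :=
  isPreconnected_connectedComponentIn.ordConnected

theorem movedComponent_eq (hx : x ∈ f.movedComponent p) :
    f.movedComponent x = f.movedComponent p :=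
  (connectedComponentIn_eq hx).symm

theorem mapsTo_movedComponent {W : ℝ ≃o ℝ} (h : Commute f W) (p : ℝ) :
    MapsTo W (f.movedComponent p) (f.movedComponent (W p)) := by
  by_cases hp : f p = p
  · simp [movedComponent, connectedComponentIn_eq_empty, hp, mapsTo_empty]
  refine (W.continuous.continuousOn.mapsTo_connectedComponentIn hp).mono_right
    (connectedComponentIn_mono _ ?_)
  rintro _ ⟨y, hy, rfl⟩
  show f (W y) ≠ W y
  rw [apply_apply_of_commute h]
  exact W.injective.ne hy

theorem mapsTo_movedComponent_self {u : ℝ ≃o ℝ} (h : Commute T u)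
    (hu : u q ∈ T.movedComponent q) : MapsTo u (T.movedComponent q) (T.movedComponent q) :=
  movedComponent_eq hu ▸ mapsTo_movedComponent h q

theorem inv_mul_apply_mem_movedComponent {g g' : ℝ ≃o ℝ} (hg : Commute T g) (hg' : Commute T g')
    (hq : T q ≠ q) (h : T.movedComponent (g q) = T.movedComponent (g' q)) :
    (g'⁻¹ * g) q ∈ T.movedComponent q := by
  have hgq : g q ∈ T.movedComponent (g' q) := by
    rw [← h]
    refine mem_movedComponent_self ?_
    rw [apply_apply_of_commute hg]
    exact g.injective.ne hq
  simpa using mapsTo_movedComponent hg'.inv_right (g' q) hgq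

theorem apply_mem_movedComponent (hq : q < f q) : f q ∈ f.movedComponent q := by
  refine isPreconnected_Icc.subset_connectedComponentIn (left_mem_Icc.2 hq.le) ?_
    (right_mem_Icc.2 hq.le)
  intro z hz hfz
  have hzq : z = f q := le_antisymm hz.2 (hfz ▸ f.monotone hz.1)
  exact hq.ne' (f.injective (hzq ▸ hfz))

theorem exists_rat_lt_apply_or_lt_inv_apply (hf : f ≠ 1) :
    ∃ q : ℚ, (q : ℝ) < f q ∨ (q : ℝ) < f⁻¹ q := by
  by_contra! h
  have hid : ⇑f = id := Continuous.ext_on Rat.denseRange_cast f.continuous continuous_id <| by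
    rintro _ ⟨q, rfl⟩
    exact le_antisymm (h q).1 (f.symm_apply_le.1 (h q).2)
  exact hf (DFunLike.ext _ _ (congrFun hid))

theorem exists_le_pow_apply (hq : q ≤ f q) (hx : x ∈ f.movedComponent q) :
    ∃ n : ℕ, x ≤ (f ^ n) q := by
  by_contra! h
  simp only [pow_apply_eq_iterate] at h
  have hbdd : BddAbove (range fun n ↦ f^[n] q) := ⟨x, forall_mem_range.2 fun n ↦ (h n).le⟩
  have hfix := isFixedPt_of_tendsto_iterate
    (tendsto_atTop_ciSup (f.monotone.monotone_iterate_of_le_map hq) hbdd) f.continuous.continuousAt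
  exact apply_ne_of_mem_movedComponent ((ordConnected_movedComponent f q).out
    (mem_movedComponent_self_of_mem hx) hx ⟨le_ciSup hbdd 0, ciSup_le fun n ↦ (h n).le⟩) hfix

theorem exists_inv_pow_apply_le (hq : q ≤ f q) (hx : x ∈ f.movedComponent q) :
    ∃ n : ℕ, (f⁻¹ ^ n) q ≤ x := by
  set g := f⁻¹
  by_contra! h
  simp only [pow_apply_eq_iterate] at h
  have hbdd : BddBelow (range fun n ↦ g^[n] q) := ⟨x, forall_mem_range.2 fun n ↦ (h n).le⟩
  have hfix := isFixedPt_of_tendsto_iterate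
    (tendsto_atTop_ciInf (g.monotone.antitone_iterate_of_map_le (f.symm_apply_le.2 hq)) hbdd)
    g.continuous.continuousAt
  refine apply_ne_of_mem_movedComponent ((ordConnected_movedComponent f q).out hx
    (mem_movedComponent_self_of_mem hx) ⟨le_ciInf fun n ↦ (h n).le, ciInf_le hbdd 0⟩) ?_
  nth_rw 1 [← hfix]
  exact f.apply_symm_apply _

theorem exists_zpow_apply_le_le (hq : q < T q) (hx : x ∈ T.movedComponent q) :
    ∃ a : ℤ, (T ^ a) q ≤ x ∧ x ≤ (T ^ (a + 1)) q := by
  have hmono : StrictMono fun m : ℤ ↦ (T ^ m) q := strictMono_int_of_lt_succ fun m ↦ by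
    simpa only [zpow_add_one, RelIso.mul_apply] using (T ^ m).strictMono hq
  obtain ⟨n, hn⟩ := exists_le_pow_apply hq.le hx
  obtain ⟨k, hk⟩ := exists_inv_pow_apply_le hq.le hx
  obtain ⟨a, ha, hmax⟩ := Int.exists_greatest_of_bdd (P := fun m ↦ (T ^ m) q ≤ x)
    ⟨n, fun m hm ↦ hmono.le_iff_le.1 (hm.trans (by simpa using hn))⟩
    ⟨-k, by simpa [zpow_neg] using hk⟩
  refine ⟨a, ha, le_of_not_ge fun h ↦ ?_⟩
  linarith [hmax (a + 1) h]

theorem commutatorElement_apply_le {D D' : ℝ ≃o ℝ} (hq : q < T q) (hD : Commute T D)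
    (hD' : Commute T D') (hDq : D q ∈ T.movedComponent q) (hD'q : D' q ∈ T.movedComponent q) :
    ⁅D, D'⁆ q ≤ (T ^ 2) q := by
  obtain ⟨a, ha, ha'⟩ := exists_zpow_apply_le_le hq hDq
  obtain ⟨b, hb, hb'⟩ := exists_zpow_apply_le_le hq hD'q
  have h := apply_le_zpow_apply hD (apply_le_zpow_apply hD' (apply_le_zpow_apply hD.inv_right
    (inv_apply_le_zpow_neg_apply hD' hb) (inv_apply_le_zpow_neg_apply hD ha)) hb') ha'
  rw [show -b + -a + (b + 1) + (a + 1) = 2 by ring, zpow_ofNat] at h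
  simpa only [commutatorElement_def, RelIso.mul_apply] using h

theorem exists_pow_commutatorElement_apply_lt (hq : q < T q) {u v : ℕ → ℝ ≃o ℝ}
    (hu : Pairwise fun i j ↦ Commute (u i) (u j)) (hv : Pairwise fun i j ↦ Commute (v i) (v j))
    (huv : Pairwise fun i j ↦ Commute (u i) (v j)) (huT : ∀ i, Commute T (u i))
    (hvT : ∀ i, Commute T (v i)) (huq : ∀ i, u i q ∈ T.movedComponent q)
    (hvq : ∀ i, v i q ∈ T.movedComponent q) (N : ℕ) : ∃ i, (⁅u i, v i⁆ ^ N) q < T q := by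
  by_contra! hN
  set n := 2 * N + 1
  set D := ((List.range n).map u).prod
  set D' := ((List.range n).map v).prod
  have hD : Commute T D := Commute.list_prod_right _ _ (by simpa using fun i _ ↦ huT i)
  have hD' : Commute T D' := Commute.list_prod_right _ _ (by simpa using fun i _ ↦ hvT i)
  have hqJ := mem_movedComponent_self hq.ne'
  have hDq : D q ∈ T.movedComponent q :=
    mapsTo_prod_range (fun i ↦ mapsTo_movedComponent_self (huT i) (huq i)) n hqJ
  have hD'q : D' q ∈ T.movedComponent q :=
    mapsTo_prod_range (fun i ↦ mapsTo_movedComponent_self (hvT i) (hvq i)) n hqJ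
  have hcomm : Pairwise fun i j ↦ Commute ⁅u i, v i⁆ ⁅u j, v j⁆ := fun i j hij ↦
    ((hu hij.symm).commutatorElement_right (huv hij.symm)).symm.commutatorElement_right
      ((huv hij).symm.commutatorElement_right (hv hij.symm)).symm
  have hupper : (⁅D, D'⁆ ^ N) q ≤ (T ^ (2 * N)) q := by
    rw [pow_mul]
    exact pow_apply_le_pow_apply ((hD.commutatorElement_right hD').symm.pow_right 2)
      (commutatorElement_apply_le hq hD hD' hDq hD'q) N
  have hlower : (T ^ n) q ≤ (⁅D, D'⁆ ^ N) q := by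
    rw [commutatorElement_prod_range hu hv huv]
    exact pow_apply_le_prod_pow_apply hcomm (fun i ↦ (huT i).commutatorElement_right (hvT i)) hN n
  have hstep : (T ^ (2 * N)) q < (T ^ n) q := by
    rw [pow_succ, RelIso.mul_apply]
    exact (T ^ (2 * N)).strictMono hq
  exact (hlower.trans hupper).not_gt hstep

theorem exists_pow_map_commutatorElement_apply_lt {ψ : ℕ → G →* ℝ ≃o ℝ}
    (hψ : Pairwise fun i j ↦ ∀ g g', Commute (ψ i g) (ψ j g')) (hq : q < T q)
    (hT : ∀ n g, Commute T (ψ n g)) {x y : G}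
    (hx : ∀ m n, T.movedComponent (ψ m x q) = T.movedComponent (ψ n x q))
    (hy : ∀ m n, T.movedComponent (ψ m y q) = T.movedComponent (ψ n y q)) (N : ℕ) :
    ∃ n, (ψ n ⁅x, y⁆ ^ N) q < T q := by
  -- The factors indexed by `3 * i + 1` and `3 * i + 2` drop out of `⁅u i, v i⁆`, but they make
  -- `u i` and `v i` map the component of `q` into itself.
  let u i := ψ (3 * i + 1) x⁻¹ * ψ (3 * i) x
  let v i := ψ (3 * i + 2) y⁻¹ * ψ (3 * i) y
  have huv (i : ℕ) : ⁅u i, v i⁆ = ψ (3 * i) ⁅x, y⁆ := by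
    rw [commutatorElement_mul_mul (hψ (by omega) _ _) (hψ (by omega) _ _) (hψ (by omega) _ _)
      (hψ (by omega) _ _), commutatorElement_eq_one_iff_commute.2 (hψ (by omega) _ _), one_mul,
      map_commutatorElement]
  have hmem {g : G} (hg : ∀ m n, T.movedComponent (ψ m g q) = T.movedComponent (ψ n g q))
      (k i : ℕ) : (ψ k g⁻¹ * ψ i g) q ∈ T.movedComponent q := by
    simpa only [map_inv] using inv_mul_apply_mem_movedComponent (hT i g) (hT k g) hq.ne' (hg i k)
  obtain ⟨i, hi⟩ := exists_pow_commutatorElement_apply_lt hq (u := u) (v := v)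
    (fun i j _ ↦ commute_map_mul_map hψ (by omega) (by omega) (by omega) (by omega) _ _ _ _)
    (fun i j _ ↦ commute_map_mul_map hψ (by omega) (by omega) (by omega) (by omega) _ _ _ _)
    (fun i j _ ↦ commute_map_mul_map hψ (by omega) (by omega) (by omega) (by omega) _ _ _ _)
    (fun i ↦ (hT _ _).mul_right (hT _ _)) (fun i ↦ (hT _ _).mul_right (hT _ _))
    (fun i ↦ hmem hx _ _) (fun i ↦ hmem hy _ _) N
  exact ⟨3 * i, huv i ▸ hi⟩

theorem exists_not_countable_apply_mem_movedComponent {h : ι → ℝ ≃o ℝ} {S : Set ι}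
    (hS : ¬ S.Countable) (hq : ∀ i ∈ S, q < h i q) :
    ∃ j ∈ S, ¬ {i ∈ S | i ≠ j ∧ h j q ∈ (h i).movedComponent q}.Countable := by
  choose! r hr using fun i (hi : i ∈ S) ↦
    (isOpen_movedComponent _ _).exists_rat_gt_mem (apply_mem_movedComponent (hq i hi))
  -- a common rational `r₀` above the `h i q` puts `[q, h j q]` inside every component
  obtain ⟨r₀, hr₀⟩ := exists_not_countable_fiber hS r
  obtain ⟨j, hjS, hj⟩ := (infinite_of_not_countable hr₀).nonempty
  refine ⟨j, hjS, fun hc ↦ hr₀ ((hc.insert j).mono ?_)⟩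
  rintro i ⟨hiS, hi⟩
  rcases eq_or_ne i j with rfl | hij
  · exact mem_insert _ _
  refine mem_insert_of_mem _ ⟨hiS, hij, (ordConnected_movedComponent _ _).out
    (mem_movedComponent_self (hq i hiS).ne') (hr i hiS).2 ⟨(hq j hjS).le, ?_⟩⟩
  exact ((hr j hjS).1.trans_eq (by rw [hj, hi])).le

theorem exists_map_commutatorElement_apply_le {ψ : ι → G →* ℝ ≃o ℝ}
    (hψ : Pairwise fun i j ↦ ∀ g g', Commute (ψ i g) (ψ j g')) (x y : G) (q : ℝ) {S : Set ι}
    (hS : ¬ S.Countable) : ∃ i ∈ S, ψ i ⁅x, y⁆ q ≤ q := by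
  by_contra! hq
  obtain ⟨j, hjS, hS'⟩ := exists_not_countable_apply_mem_movedComponent hS hq
  set T := ψ j ⁅x, y⁆
  set S' := {i ∈ S | i ≠ j ∧ T q ∈ (ψ i ⁅x, y⁆).movedComponent q}
  have hN (i) (hi : i ∈ S') : ∃ N : ℕ, T q ≤ (ψ i ⁅x, y⁆ ^ N) q :=
    exists_le_pow_apply (hq i hi.1).le hi.2.2
  have htag (i) (hi : i ∈ S') (g : G) :
      ∃ s : ℚ, T.movedComponent (ψ i g q) = T.movedComponent s := by
    have hmoved : T (ψ i g q) ≠ ψ i g q := by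
      rw [apply_apply_of_commute (hψ hi.2.1.symm _ _)]
      exact (ψ i g).injective.ne (hq j hjS).ne'
    obtain ⟨s, -, hs⟩ := (isOpen_movedComponent _ _).exists_rat_gt_mem
      (mem_movedComponent_self hmoved)
    exact ⟨s, (movedComponent_eq hs).symm⟩
  choose! N hN using hN
  choose! s hs using htag
  obtain ⟨⟨N₀, sx, sy⟩, hS''⟩ := exists_not_countable_fiber hS' fun i ↦ (N i, s i x, s i y)
  set e := (infinite_of_not_countable hS'').natEmbedding
  have he (n : ℕ) : (e n : ι) ∈ S' ∧ N (e n) = N₀ ∧ s (e n) x = sx ∧ s (e n) y = sy := by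
    obtain ⟨h₁, h₂⟩ := (e n).2
    simp only [Prod.mk.injEq] at h₂
    exact ⟨h₁, h₂⟩
  obtain ⟨n, hn⟩ := exists_pow_map_commutatorElement_apply_lt (ψ := fun n ↦ ψ (e n))
    (hψ.comp_of_injective (Subtype.val_injective.comp e.injective)) (hq j hjS)
    (fun n g ↦ hψ (he n).1.2.1.symm _ _) (x := x) (y := y)
    (fun m n ↦ by rw [hs _ (he m).1, hs _ (he n).1, (he m).2.2.1, (he n).2.2.1])
    (fun m n ↦ by rw [hs _ (he m).1, hs _ (he n).1, (he m).2.2.2, (he n).2.2.2]) N₀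
  have hNn := hN _ (he n).1
  rw [(he n).2.1] at hNn
  exact hn.not_ge hNn

theorem exists_not_countable_lt_map_commutatorElement_apply [Uncountable ι]
    {ψ : ι → G →* ℝ ≃o ℝ} {a b : G} (h : ∀ i, ψ i ⁅a, b⁆ ≠ 1) :
    ∃ (x y : G) (q : ℝ) (S : Set ι), ¬ S.Countable ∧ ∀ i ∈ S, q < ψ i ⁅x, y⁆ q := by
  choose q hq using fun i ↦ exists_rat_lt_apply_or_lt_inv_apply (h i)
  obtain ⟨q₀, hS⟩ := exists_not_countable_fiber not_countable_univ q
  have hsub : {i ∈ univ | q i = q₀} ⊆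
      {i | (q₀ : ℝ) < ψ i ⁅a, b⁆ q₀} ∪ {i | (q₀ : ℝ) < ψ i ⁅b, a⁆ q₀} := by
    rintro i ⟨-, rfl⟩
    simpa only [← map_inv, commutatorElement_inv, mem_union, mem_ofPred_eq] using hq i
  rcases not_and_or.1 (fun h ↦ hS ((countable_union.2 h).mono hsub)) with hab | hba
  exacts [⟨a, b, q₀, _, hab, fun i hi ↦ hi⟩, ⟨b, a, q₀, _, hba, fun i hi ↦ hi⟩]

end OrderIso

theorem stmt_8 {I : Type*} [Uncountable I] (G : Type*) [Group G]
    (hna : ∃ a b : G, a * b ≠ b * a) :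
    ¬ ∃ φ : directSum I (fun _ : I => G) →* HomeoPlusR, Function.Injective φ := by
  classical
  rintro ⟨φ, hφ⟩
  obtain ⟨a, b, hab⟩ := hna
  let ψ (i : I) : G →* HomeoPlusR := φ.comp (directSum.mulSingle (G := fun _ ↦ G) i)
  have hψ : Pairwise fun i j ↦ ∀ g g', Commute (ψ i g) (ψ j g') :=
    fun i j hij g g' ↦ (directSum.commute_mulSingle hij g g').map φ
  have hne (i : I) : ψ i ⁅a, b⁆ ≠ 1 :=
    (map_ne_one_iff (ψ i) (hφ.comp (directSum.mulSingle_injective i))).2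
      (mt commutatorElement_eq_one_iff_mul_comm.1 hab)
  obtain ⟨x, y, q, S, hS, hq⟩ := OrderIso.exists_not_countable_lt_map_commutatorElement_apply hne
  obtain ⟨i, hi, hle⟩ := OrderIso.exists_map_commutatorElement_apply_le hψ x y q hS
  exact (hq i hi).not_ge hle
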